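/- Let n ≥ 1 and let g(y,p,q) = r(y) + p₁ + Σᵢ₌₂ⁿ (pᵢ + P̃ᵢ(p,q))·y^{2i−2} + Σᵢ₌₁ⁿ Q̃ᵢ(p,q)·y^{2i−1} + φ(y,p,q)·y^{2n} and g′(y,p,q) = r′(y) + p₁ + Σᵢ₌₂ⁿ (pᵢ + P̃ᵢ′(p,q))·y^{2i−2} + Σᵢ₌₁ⁿ Q̃ᵢ′(p,q)·y^{2i−1} + φ′(y,p,q)·y^{2n} be two smooth germs at 0 ∈ ℝ^{2n+1} in normal form, i.e. r(0)=r′(0)=0, dr/dy(0) ≠ 0, dr′/dy(0) ≠ 0, φ(y,0,0)=φ′(y,0,0)=0, ∂Q̃ᵢ/∂qᵢ(0) ≠ 0 and ∂Q̃ᵢ′/∂qᵢ(0) ≠ 0 for i = 1,…,n, P̃ᵢ, P̃ᵢ′ ∈ I_{2i−2} for i = 2,…,n, and Q̃ᵢ, Q̃ᵢ′ ∈ I_{2i−1} for i = 1,…,n. If there exists a local quasi-symplectomorphism Ψ of ω̂₀ with y∘Ψ = y and g′∘Ψ = g on a neighbourhood of 0, then r = r′, φ = φ′, P̃ᵢ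 = P̃ᵢ′ (i = 2,…,n) and Q̃ᵢ = Q̃ᵢ′ (i = 1,…,n) as germs at 0. -/

import Mathlib

open Filter Topology

noncomputable section

/-- `ℝ^{2n}` with coordinates `(p, q) = (p₁,…,pₙ,q₁,…,qₙ)`. -/
abbrev PQ (n : ℕ) : Type := (Fin n → ℝ) × (Fin n → ℝ)

/-- A smooth germ at `0`: a function which is `C^∞` on some neighbourhood of `0`. -/
def SmoothGerm {E F : Type*} [NormedAddCommGroup E] [NormedSpace ℝ E]
    [NormedAddCommGroup F] [NormedSpace ℝ F] (f : E → F) : Prop :=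
  ∃ U ∈ 𝓝 (0 : E), ContDiffOn ℝ (⊤ : ℕ∞) f U

/-- The standard symplectic form `ω₀ = Σᵢ dpᵢ∧dqᵢ` on `ℝ^{2n}` as a constant
alternating bilinear form. -/
def omega0 (n : ℕ) (u v : PQ n) : ℝ := ∑ i : Fin n, (u.1 i * v.2 i - u.2 i * v.1 i)

/-- A local symplectomorphism of `ω₀`: `Ψ(0) = 0`, smooth near `0`, invertible
derivative, and `DΨ(z)` preserves `ω₀` for all `z` near `0`. -/
def IsLocalSymp (n : ℕ) (Ψ : PQ n → PQ n) : Prop :=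
  Ψ 0 = 0 ∧ SmoothGerm Ψ ∧ Function.Bijective ⇑(fderiv ℝ Ψ 0) ∧
    ∀ᶠ z in 𝓝 (0 : PQ n), ∀ u v : PQ n,
      omega0 n (fderiv ℝ Ψ z u) (fderiv ℝ Ψ z v) = omega0 n u v

/-- The `j`-th generator (0-indexed) of the list `q₁,p₁,q₂,p₂,…,qₙ,pₙ`. -/
def genFun (n j : ℕ) (z : PQ n) : ℝ :=
  if h : j / 2 < n then (if j % 2 = 0 then z.2 ⟨j / 2, h⟩ else z.1 ⟨j / 2, h⟩) else 0

/-- Membership (as germs at `0`) in the ideal `I_k` generated by the first `k`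
functions of the list `q₁,p₁,q₂,p₂,…,qₙ,pₙ`. -/
def InIdeal (n k : ℕ) (g : PQ n → ℝ) : Prop :=
  ∃ c : Fin k → (PQ n → ℝ), (∀ j, SmoothGerm (c j)) ∧
    ∀ᶠ z in 𝓝 (0 : PQ n), g z = ∑ j : Fin k, c j z * genFun n j.1 z

/-- `ℝ^{2n+1}` with coordinates `(y, p, q)`. -/
abbrev YPQ (n : ℕ) : Type := ℝ × PQ n

/-- The standard quasi-symplectic form `ω̂₀ = Σᵢ dpᵢ∧dqᵢ` on `ℝ^{2n+1}`. -/
def omegaQ (n : ℕ) (u v : YPQ n) : ℝ := omega0 n u.2 v.2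

/-- A local quasi-symplectomorphism of `ω̂₀` on `ℝ^{2n+1}`. -/
def IsLocalQuasiSymp (n : ℕ) (Ψ : YPQ n → YPQ n) : Prop :=
  Ψ 0 = 0 ∧ SmoothGerm Ψ ∧ Function.Bijective ⇑(fderiv ℝ Ψ 0) ∧
    ∀ᶠ z in 𝓝 (0 : YPQ n), ∀ u v : YPQ n,
      omegaQ n (fderiv ℝ Ψ z u) (fderiv ℝ Ψ z v) = omegaQ n u v

/-!
The fibre direction `∂_y` spans the kernel of `ω̂₀`, so a quasi-symplectomorphism preserving `y`
has the form `(y, z) ↦ (y, ψ z)` with `ψ` a local symplectomorphism of `(p, q)`-space.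
Comparing the coefficients of the powers of `y` in `g' (y, ψ z) = g (y, z)` gives `r = r'`,
`φ = φ' ∘ Ψ`, and for every `i` the equations `pᵢ ∘ ψ + P̃ᵢ' ∘ ψ = pᵢ + P̃ᵢ` and
`Q̃ᵢ' ∘ ψ = Q̃ᵢ`. These force `ψ = id`, one pair `(pₗ, qₗ)` at a time. If `ψ` fixes the pairs
`k < l`, then `Dψ`, being symplectic, fixes the corresponding directions, so `pₗ ∘ ψ - pₗ` is
constant along them; and it vanishes where these coordinates do, since `P̃ₗ` and `P̃ₗ'` vanish
there. Once `pₗ` is fixed, `Dψ` also preserves the `qₗ`-component of `∂_{qₗ}`, and the same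
argument applies to `qₗ ∘ ψ - qₗ` on the slice where moreover `qₗ = 0`: there `Q̃ₗ` vanishes,
while `Q̃ₗ'` is `qₗ` times a unit.
-/

section Calculus

variable {E F : Type*} [NormedAddCommGroup E] [NormedSpace ℝ E] [NormedAddCommGroup F]
  [NormedSpace ℝ F]

lemma SmoothGerm.eventually_differentiableAt {f : E → F} (hf : SmoothGerm f) :
    ∀ᶠ w in 𝓝 0, DifferentiableAt ℝ f w := by
  obtain ⟨U, hU, hfU⟩ := hf
  filter_upwards [interior_mem_nhds.2 hU] with w hw
  exact ((hfU.mono interior_subset).differentiableOn (by simp)).differentiableAt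
    (isOpen_interior.mem_nhds hw)

lemma Convex.apply_eq_of_fderiv_apply_sub_eq_zero {f : E → F} {f' : E → E →L[ℝ] F} {s : Set E}
    (hs : Convex ℝ s) (hf : ∀ w ∈ s, HasFDerivAt f (f' w) w) {x y : E} (hx : x ∈ s)
    (hy : y ∈ s) (h : ∀ w ∈ s, f' w (y - x) = 0) : f y = f x := by
  have segm := hs.mapsTo_lineMap hx hy
  have hD : ∀ t ∈ Set.Icc (0 : ℝ) 1,
      HasDerivWithinAt (f ∘ AffineMap.lineMap x y) 0 (Set.Icc 0 1) t := fun t ht => by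
    simpa [h _ (segm ht)] using
      (hf _ (segm ht)).hasFDerivWithinAt.comp_hasDerivWithinAt t
        AffineMap.hasDerivWithinAt_lineMap segm
  simpa [sub_eq_zero] using
    norm_image_sub_le_of_norm_deriv_le_segment_01' hD fun _ _ => norm_zero.le

lemma HasFDerivAt.clm_comp_eq_of_eventually_eq {f : E → E} {f' : E →L[ℝ] E} {x : E}
    {L : E →L[ℝ] F} (hf : HasFDerivAt f f' x) (h : ∀ᶠ z in 𝓝 x, L (f z) = L z) : L.comp f' = L :=
  (L.hasFDerivAt.comp x hf).unique (L.hasFDerivAt.congr_of_eventuallyEq h)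

lemma eventually_apply_eq_apply_sub {f : E → F} {f' : E → E →L[ℝ] F} {π : E →L[ℝ] E}
    (hf : ∀ᶠ w in 𝓝 0, HasFDerivAt f (f' w) w) (hπ : ∀ᶠ w in 𝓝 0, ∀ v, f' w (π v) = 0) :
    ∀ᶠ z in 𝓝 0, f z = f (z - π z) := by
  obtain ⟨ε, hε, hball⟩ := Metric.eventually_nhds_iff_ball.1 (hf.and hπ)
  have hproj : ∀ᶠ z in 𝓝 0, z - π z ∈ Metric.ball 0 ε :=
    ((continuous_id.sub π.continuous).tendsto' 0 0 (by simp)).eventually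
      (Metric.ball_mem_nhds 0 hε)
  filter_upwards [hproj, Metric.ball_mem_nhds 0 hε] with z hzπ hzε
  exact (convex_ball 0 ε).apply_eq_of_fderiv_apply_sub_eq_zero (fun w hw => (hball w hw).1)
    hzπ hzε fun w hw => by simpa using (hball w hw).2 z

end Calculus

section Coefficients

lemma eq_zero_and_eventually_eq_zero_of_add_mul {a : ℝ} {σ : ℝ → ℝ} (hσ : ContinuousAt σ 0)
    (h : ∀ᶠ y in 𝓝 0, a + y * σ y = 0) : a = 0 ∧ ∀ᶠ y in 𝓝 0, σ y = 0 := by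
  have ha : a = 0 := by simpa using h.self_of_nhds
  have hne : ∀ᶠ y in 𝓝[≠] 0, σ y = 0 := by
    filter_upwards [nhdsWithin_le_nhds h, self_mem_nhdsWithin] with y hy hy0
    exact (mul_eq_zero.1 (by simpa [ha] using hy)).resolve_left hy0
  have h0 : σ 0 = 0 := tendsto_nhds_unique (hσ.tendsto.mono_left nhdsWithin_le_nhds)
    (tendsto_const_nhds.congr' (hne.mono fun _ h => h.symm))
  rw [← nhdsNE_sup_pure, eventually_sup]
  exact ⟨ha, hne, h0⟩

lemma coeffs_eq_zero_of_eventually_sum_add_mul_pow_eq_zero :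
    ∀ {n : ℕ} {a b : Fin n → ℝ} {ρ : ℝ → ℝ}, ContinuousAt ρ 0 →
    (∀ᶠ y in 𝓝 0, ∑ i : Fin n, (a i * y ^ (2 * i.1) + b i * y ^ (2 * i.1 + 1))
      + ρ y * y ^ (2 * n) = 0) →
    (∀ i, a i = 0 ∧ b i = 0) ∧ ∀ᶠ y in 𝓝 0, ρ y = 0
  | 0, _, _, _, _, h => ⟨fun i => i.elim0, by simpa using h⟩
  | n + 1, a, b, ρ, hρ, h => by
    set σ : ℝ → ℝ := fun y => ∑ i : Fin n,
      (a i.succ * y ^ (2 * i.1) + b i.succ * y ^ (2 * i.1 + 1)) + ρ y * y ^ (2 * n)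
    have hσ : ContinuousAt σ 0 := by fun_prop
    have hexp (y : ℝ) : ∑ i : Fin (n + 1), (a i * y ^ (2 * i.1) + b i * y ^ (2 * i.1 + 1))
        + ρ y * y ^ (2 * (n + 1)) = a 0 + y * (b 0 + y * σ y) := by
      simp only [σ, Fin.sum_univ_succ, Fin.val_succ, Fin.val_zero, mul_add, Finset.mul_sum]
      ring_nf
    simp only [hexp] at h
    obtain ⟨ha0, h⟩ := eq_zero_and_eventually_eq_zero_of_add_mul (by fun_prop) h
    obtain ⟨hb0, h⟩ := eq_zero_and_eventually_eq_zero_of_add_mul hσ h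
    obtain ⟨hab, hρ0⟩ := coeffs_eq_zero_of_eventually_sum_add_mul_pow_eq_zero hρ h
    exact ⟨Fin.cases ⟨ha0, hb0⟩ hab, hρ0⟩

lemma eventually_coeffs_eq_zero {X : Type*} [TopologicalSpace X] {x₀ : X} {n : ℕ}
    {a b : Fin n → X → ℝ} {ρ : ℝ × X → ℝ} (hρ : ∀ᶠ w in 𝓝 ((0 : ℝ), x₀), ContinuousAt ρ w)
    (h : ∀ᶠ w in 𝓝 ((0 : ℝ), x₀), ∑ i : Fin n, (a i w.2 * w.1 ^ (2 * i.1)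
      + b i w.2 * w.1 ^ (2 * i.1 + 1)) + ρ w * w.1 ^ (2 * n) = 0) :
    (∀ᶠ x in 𝓝 x₀, ∀ i, a i x = 0 ∧ b i x = 0) ∧ ∀ᶠ w in 𝓝 ((0 : ℝ), x₀), ρ w = 0 := by
  rw [nhds_prod_eq] at hρ h ⊢
  obtain ⟨pa, hpa, pb, hpb, hab⟩ := eventually_prod_iff.1 (hρ.and h)
  have key x (hx : pb x) : (∀ i, a i x = 0 ∧ b i x = 0) ∧ ∀ᶠ y in 𝓝 0, ρ (y, x) = 0 :=
    coeffs_eq_zero_of_eventually_sum_add_mul_pow_eq_zero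
      ((hab hpa.self_of_nhds hx).1.comp (f := fun y => (y, x)) (by fun_prop))
      (hpa.mono fun y hy => (hab hy hx).2)
  refine ⟨hpb.mono fun x hx => (key x hx).1,
    eventually_prod_iff.2 ⟨pa, hpa, pb, hpb, fun {y} hy {x} hx => ?_⟩⟩
  rcases eq_or_ne y 0 with rfl | hy0
  · exact (key x hx).2.self_of_nhds
  · simpa [(key x hx).1, hy0] using (hab hy hx).2

end Coefficients

section

variable {n : ℕ}

section Omega0

lemma omega0_zero_left (v : PQ n) : omega0 n 0 v = 0 := by simp [omega0]

lemma omega0_sub_left (u u' v : PQ n) :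
    omega0 n (u - u') v = omega0 n u v - omega0 n u' v := by
  simp only [omega0, ← Finset.sum_sub_distrib, Prod.fst_sub, Prod.snd_sub, Pi.sub_apply]
  exact Finset.sum_congr rfl fun _ _ => by ring

lemma omega0_apply_inr_single (u : PQ n) (i : Fin n) :
    omega0 n u (0, Pi.single i 1) = u.1 i := by
  simp [omega0, Pi.single_apply]

lemma omega0_apply_inl_single (u : PQ n) (i : Fin n) :
    omega0 n u (Pi.single i 1, 0) = -u.2 i := by
  simp [omega0, Pi.single_apply]

lemma omega0_inr_single_apply (u : PQ n) (i : Fin n) :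
    omega0 n (0, Pi.single i 1) u = -u.1 i := by
  simp [omega0, Pi.single_apply]

lemma eq_zero_of_omega0_eq_zero {u : PQ n} (h : ∀ v, omega0 n u v = 0) : u = 0 := by
  refine Prod.ext (funext fun i => ?_) (funext fun i => ?_)
  · simpa [omega0_apply_inr_single] using h (0, Pi.single i 1)
  · simpa [omega0_apply_inl_single] using h (Pi.single i 1, 0)

variable {M : PQ n →L[ℝ] PQ n}

lemma bijective_of_map_omega0 (hM : ∀ u v, omega0 n (M u) (M v) = omega0 n u v) :
    Function.Bijective M := by
  have hinj : Function.Injective M := fun a b hab =>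
    sub_eq_zero.1 <| eq_zero_of_omega0_eq_zero fun v => by
      rw [omega0_sub_left, ← hM a, ← hM b, hab, sub_self]
  exact ⟨hinj, LinearMap.injective_iff_surjective (f := (M : PQ n →ₗ[ℝ] PQ n)) |>.1 hinj⟩

lemma map_inr_single_snd_eq_one (hM : ∀ u v, omega0 n (M u) (M v) = omega0 n u v) (i : Fin n)
    (hp : ∀ u, (M u).1 i = u.1 i) : (M (0, Pi.single i 1)).2 i = 1 := by
  -- pair `∂_{qᵢ}` with the preimage `u` of `∂_{pᵢ}`: `-(M ∂_{qᵢ}).2 i = -u.1 i = -(M u).1 i = -1`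
  obtain ⟨u, hu⟩ := (bijective_of_map_omega0 hM).2 (Pi.single i 1, 0)
  have h := hM (0, Pi.single i 1) u
  have hu1 : u.1 i = 1 := by simpa [hu] using (hp u).symm
  rw [hu, omega0_apply_inl_single, omega0_inr_single_apply, hu1] at h
  linarith

end Omega0

section LowerPart

def lowerPart (m : ℕ) : PQ n →L[ℝ] PQ n :=
  LinearMap.toContinuousLinearMap
    { toFun := fun z => (fun k : Fin n => if (k : ℕ) < m then z.1 k else 0,
        fun k : Fin n => if (k : ℕ) < m then z.2 k else 0)
      map_add' := fun x y => by ext k <;> by_cases h : (k : ℕ) < m <;> simp [h]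
      map_smul' := fun c x => by ext k <;> by_cases h : (k : ℕ) < m <;> simp [h] }

lemma lowerPart_apply (m : ℕ) (z : PQ n) :
    lowerPart m z = (fun k : Fin n => if (k : ℕ) < m then z.1 k else 0,
      fun k : Fin n => if (k : ℕ) < m then z.2 k else 0) := rfl

@[simp] lemma lowerPart_lowerPart (m : ℕ) (z : PQ n) :
    lowerPart m (lowerPart m z) = lowerPart m z := by
  ext k <;> by_cases h : (k : ℕ) < m <;> simp [lowerPart_apply, h]

lemma lowerPart_zero (z : PQ n) : lowerPart 0 z = 0 := by
  ext k <;> simp [lowerPart_apply]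

lemma lowerPart_of_le {m : ℕ} (hm : n ≤ m) (z : PQ n) : lowerPart m z = z := by
  ext k <;> simp [lowerPart_apply, show (k : ℕ) < m by omega]

lemma lowerPart_inr_single (i : Fin n) : lowerPart i ((0, Pi.single i 1) : PQ n) = 0 := by
  ext k <;> simp [lowerPart_apply, Pi.single_apply, Fin.ext_iff]
  omega

lemma lowerPart_succ_eq {l : Fin n} {x y : PQ n} (h : lowerPart l x = lowerPart l y)
    (h1 : x.1 l = y.1 l) (h2 : x.2 l = y.2 l) : lowerPart (l + 1) x = lowerPart (l + 1) y := by
  have hp k := congrFun (congrArg Prod.fst h) k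
  have hq k := congrFun (congrArg Prod.snd h) k
  simp only [lowerPart_apply] at hp hq ⊢
  ext k <;> dsimp only <;> split_ifs with hk <;> try rfl
  all_goals rcases Nat.lt_succ_iff_lt_or_eq.1 hk with hkl | hkl
  · simpa [hkl] using hp k
  · rwa [Fin.ext hkl]
  · simpa [hkl] using hq k
  · rwa [Fin.ext hkl]

lemma omega0_lowerPart (m : ℕ) (u v : PQ n) :
    omega0 n (lowerPart m u) v = omega0 n (lowerPart m u) (lowerPart m v) := by
  simp only [omega0, lowerPart_apply]
  exact Finset.sum_congr rfl fun k _ => by split_ifs <;> simp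

/-- For `v` supported on the pairs `k < m`, `ω₀(v, ·)` only sees these pairs, on which `M` acts
trivially; so `ω₀(M v - v, M u) = 0` for all `u`. -/
lemma map_eq_self_of_lowerPart {m : ℕ} {M : PQ n →L[ℝ] PQ n}
    (hM : ∀ u v, omega0 n (M u) (M v) = omega0 n u v) (hfix : (lowerPart m).comp M = lowerPart m)
    {v : PQ n} (hv : lowerPart m v = v) : M v = v := by
  refine sub_eq_zero.1 <| eq_zero_of_omega0_eq_zero fun w => ?_
  obtain ⟨u, rfl⟩ := (bijective_of_map_omega0 hM).2 w
  have hMu : lowerPart m (M u) = lowerPart m u := congrArg (· u) hfix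
  rw [omega0_sub_left, hM, ← hv, omega0_lowerPart m _ (M u), hMu, ← omega0_lowerPart, sub_self]

end LowerPart

section Generators

def genCLM (j : ℕ) : PQ n →L[ℝ] ℝ :=
  LinearMap.toContinuousLinearMap
    { toFun := genFun n j
      map_add' := fun x y => by unfold genFun; split_ifs <;> simp
      map_smul' := fun c x => by unfold genFun; split_ifs <;> simp }

lemma coe_genCLM (j : ℕ) : ⇑(genCLM j : PQ n →L[ℝ] ℝ) = genFun n j := rfl

lemma genFun_lowerPart {m j : ℕ} (hj : j < 2 * m) (z : PQ n) :
    genFun n j (lowerPart m z) = genFun n j z := by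
  unfold genFun
  split_ifs <;> simp [lowerPart_apply, show j / 2 < m by omega]

lemma genFun_eq_zero_of_lowerPart_eq_zero {m j : ℕ} (hj : j < 2 * m) {z : PQ n}
    (hz : lowerPart m z = 0) : genFun n j z = 0 := by
  rw [← genFun_lowerPart hj, hz, ← coe_genCLM, map_zero]

lemma genFun_two_mul (i : Fin n) (z : PQ n) : genFun n (2 * i) z = z.2 i := by
  have h : 2 * (i : ℕ) / 2 = i := by omega
  simp [genFun, h]

lemma genFun_eq_zero_of_lowerPart_eq_zero_of_snd_eq_zero {i : Fin n} {j : ℕ}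
    (hj : j < 2 * i + 1) {z : PQ n} (hz : lowerPart i z = 0) (hz2 : z.2 i = 0) :
    genFun n j z = 0 := by
  rcases (show j < 2 * i ∨ j = 2 * i by omega) with hj | rfl
  · exact genFun_eq_zero_of_lowerPart_eq_zero hj hz
  · rwa [genFun_two_mul]

lemma InIdeal.eventually_eq_zero {k : ℕ} {g : PQ n → ℝ} (hg : InIdeal n k g) :
    ∀ᶠ z in 𝓝 0, (∀ j < k, genFun n j z = 0) → g z = 0 := by
  obtain ⟨c, -, hc⟩ := hg
  filter_upwards [hc] with z hz h
  rw [hz]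
  exact Finset.sum_eq_zero fun j _ => by rw [h j j.2, mul_zero]

lemma InIdeal.apply_zero {k : ℕ} {g : PQ n → ℝ} (hg : InIdeal n k g) : g 0 = 0 :=
  hg.eventually_eq_zero.self_of_nhds fun j _ => by rw [← coe_genCLM, map_zero]

/-- On the slice `lowerPart i z = 0`, `g = c · qᵢ` where `c` is the coefficient of the last
generator `qᵢ`; and `c 0 = ∂g/∂qᵢ(0) ≠ 0`. -/
lemma InIdeal.eventually_snd_eq_zero {i : Fin n} {g : PQ n → ℝ} (hg : InIdeal n (2 * i + 1) g)
    (hd : fderiv ℝ g 0 (0, Pi.single i 1) ≠ 0) :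
    ∀ᶠ z in 𝓝 0, lowerPart i z = 0 → g z = 0 → z.2 i = 0 := by
  obtain ⟨c, hcs, hc⟩ := hg
  have hdiff j : DifferentiableAt ℝ (c j) 0 := (hcs j).eventually_differentiableAt.self_of_nhds
  have hsum (a : Fin (2 * i + 1) → ℝ) (v : PQ n) (hv : lowerPart i v = 0) :
      ∑ j, a j * genFun n j v = a (Fin.last _) * v.2 i := by
    simp [Fin.sum_univ_castSucc, genFun_eq_zero_of_lowerPart_eq_zero _ hv, genFun_two_mul]
  have hfd : fderiv ℝ g 0 (0, Pi.single i 1) = c (Fin.last _) 0 := by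
    have hg' : HasFDerivAt g (∑ j, c j 0 • genCLM j) 0 := by
      refine (HasFDerivAt.fun_sum fun j _ => ?_).congr_of_eventuallyEq hc
      simpa [← coe_genCLM] using (hdiff j).hasFDerivAt.fun_mul (genCLM j).hasFDerivAt
    simpa [hg'.fderiv, coe_genCLM] using hsum (c · 0) _ (lowerPart_inr_single i)
  have hne : ∀ᶠ z in 𝓝 0, c (Fin.last _) z ≠ 0 :=
    (hdiff _).continuousAt.eventually_ne (hfd ▸ hd)
  filter_upwards [hc, hne] with z hz hcz hlow hgz
  rw [hz, hsum (c · z) z hlow] at hgz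
  exact (mul_eq_zero.1 hgz).resolve_left hcz

end Generators

section Fibre

/-- `∂_y` is `ω̂₀`-orthogonal to everything and the fibre part of `M` is symplectic, hence onto;
so the fibre part of `M ∂_y` is `ω₀`-orthogonal to everything. -/
lemma map_inl_one_snd_eq_zero {M : YPQ n →L[ℝ] YPQ n}
    (hM : ∀ u v, omegaQ n (M u) (M v) = omegaQ n u v) : (M (1, 0)).2 = 0 := by
  set T := (ContinuousLinearMap.snd ℝ ℝ (PQ n)).comp (M.comp (ContinuousLinearMap.inr ℝ ℝ (PQ n)))
  have hT u v : omega0 n (T u) (T v) = omega0 n u v := by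
    simpa [T, omegaQ] using hM (0, u) (0, v)
  refine eq_zero_of_omega0_eq_zero fun v => ?_
  obtain ⟨u, rfl⟩ := (bijective_of_map_omega0 hT).2 v
  simpa [T, omegaQ, omega0_zero_left] using hM (1, 0) (0, u)

theorem IsLocalQuasiSymp.exists_isLocalSymp {Ψ : YPQ n → YPQ n} (hΨ : IsLocalQuasiSymp n Ψ)
    (hy : ∀ᶠ w in 𝓝 0, (Ψ w).1 = w.1) :
    ∃ ψ : PQ n → PQ n, IsLocalSymp n ψ ∧ ∀ᶠ w in 𝓝 0, Ψ w = (w.1, ψ w.2) := by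
  obtain ⟨hΨ0, hΨsm, -, hΨω⟩ := hΨ
  have hD := hΨsm.eventually_differentiableAt
  set ψ : PQ n → PQ n := fun z => (Ψ (0, z)).2
  have hinr : Tendsto (fun z : PQ n => ((0 : ℝ), z)) (𝓝 0) (𝓝 0) :=
    (continuous_const.prodMk continuous_id).tendsto' 0 0 rfl
  have hψD : ∀ᶠ z in 𝓝 0, HasFDerivAt ψ ((ContinuousLinearMap.snd ℝ ℝ (PQ n)).comp
      ((fderiv ℝ Ψ (0, z)).comp (ContinuousLinearMap.inr ℝ ℝ (PQ n)))) z :=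
    (hinr.eventually hD).mono fun z hz => (ContinuousLinearMap.snd ℝ ℝ (PQ n)).hasFDerivAt.comp z
      (hz.hasFDerivAt.comp z (ContinuousLinearMap.inr ℝ ℝ (PQ n)).hasFDerivAt)
  have hψω : ∀ᶠ z in 𝓝 0, ∀ u v, omega0 n (fderiv ℝ ψ z u) (fderiv ℝ ψ z v) = omega0 n u v := by
    filter_upwards [hψD, hinr.eventually hΨω] with z hz hω u v
    simpa [hz.fderiv, omegaQ] using hω (0, u) (0, v)
  have hψsm : SmoothGerm ψ := by
    obtain ⟨U, hU, hΨU⟩ := hΨsm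
    exact ⟨_, hinr hU, contDiff_snd.comp_contDiffOn
      (hΨU.comp (contDiff_const.prodMk contDiff_id).contDiffOn (Set.mapsTo_preimage _ _))⟩
  have hψ0 : ψ 0 = 0 := by simp only [ψ, Prod.mk_zero_zero, hΨ0, Prod.snd_zero]
  have hfib := eventually_apply_eq_apply_sub (f := fun w => (Ψ w).2)
    (π := (ContinuousLinearMap.inl ℝ ℝ (PQ n)).comp (ContinuousLinearMap.fst ℝ ℝ (PQ n)))
    (hD.mono fun w hw => (ContinuousLinearMap.snd ℝ ℝ (PQ n)).hasFDerivAt.comp w hw.hasFDerivAt)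
    (hΨω.mono fun w hω v => by
      have hv : ((ContinuousLinearMap.inl ℝ ℝ (PQ n)).comp (ContinuousLinearMap.fst ℝ ℝ (PQ n))) v
          = v.1 • (1, 0) := by ext <;> simp
      rw [ContinuousLinearMap.comp_apply, hv, map_smul]
      simp [map_inl_one_snd_eq_zero hω])
  refine ⟨ψ, ⟨hψ0, hψsm, bijective_of_map_omega0 hψω.self_of_nhds, hψω⟩, ?_⟩
  filter_upwards [hy, hfib] with w h1 h2
  have hw : w - (w.1, 0) = (0, w.2) := by ext <;> simp
  exact Prod.ext h1 (by simpa [hw] using h2)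

variable {ψ : PQ n → PQ n}

lemma IsLocalSymp.eventually_differentiableAt (hψ : IsLocalSymp n ψ) :
    ∀ᶠ w in 𝓝 0, DifferentiableAt ℝ ψ w :=
  hψ.2.1.eventually_differentiableAt

lemma IsLocalSymp.tendsto (hψ : IsLocalSymp n ψ) : Tendsto ψ (𝓝 0) (𝓝 0) := by
  simpa [hψ.1] using hψ.eventually_differentiableAt.self_of_nhds.continuousAt.tendsto

lemma IsLocalSymp.eventually_continuousAt_comp (hψ : IsLocalSymp n ψ) {f : YPQ n → ℝ}
    (hf : SmoothGerm f) : ∀ᶠ w in 𝓝 0, ContinuousAt (fun w : YPQ n => f (w.1, ψ w.2)) w := by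
  set m : YPQ n → YPQ n := fun w => (w.1, ψ w.2)
  have hmc : ∀ᶠ w in 𝓝 0, ContinuousAt m w :=
    ((continuous_snd.tendsto 0).eventually hψ.eventually_differentiableAt).mono fun w hw =>
      continuousAt_fst.prodMk (hw.continuousAt.comp continuousAt_snd)
  have hm0 : m 0 = 0 := by simp [m, hψ.1]
  have hm : Tendsto m (𝓝 0) (𝓝 0) := by simpa only [hm0] using hmc.self_of_nhds.tendsto
  filter_upwards [hmc, hm.eventually hf.eventually_differentiableAt] with w h1 h2
  exact h2.continuousAt.comp h1

end Fibre

section NormalForm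

def normalForm (r : ℝ → ℝ) (P Q : Fin n → PQ n → ℝ) (φ : YPQ n → ℝ) (w : YPQ n) : ℝ :=
  r w.1 + ∑ i : Fin n, ((w.2.1 i + P i w.2) * w.1 ^ (2 * i.1) + Q i w.2 * w.1 ^ (2 * i.1 + 1))
    + φ w * w.1 ^ (2 * n)

variable {ψ : PQ n → PQ n} {r r' : ℝ → ℝ} {P Q P' Q' : Fin n → PQ n → ℝ} {φ φ' : YPQ n → ℝ}

lemma normalForm_mk_zero (hP : ∀ i, P i 0 = 0) (hQ : ∀ i, Q i 0 = 0) {y : ℝ}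
    (hφ : φ (y, 0) = 0) : normalForm r P Q φ (y, 0) = r y := by
  simp [normalForm, hP, hQ, hφ]

theorem IsLocalSymp.normalForm_coeffs_eq (hψ : IsLocalSymp n ψ)
    (hP : ∀ i, P i 0 = 0) (hQ : ∀ i, Q i 0 = 0) (hP' : ∀ i, P' i 0 = 0) (hQ' : ∀ i, Q' i 0 = 0)
    (hφ : SmoothGerm φ) (hφ' : SmoothGerm φ')
    (hφ0 : ∀ᶠ y in 𝓝 0, φ (y, 0) = 0) (hφ0' : ∀ᶠ y in 𝓝 0, φ' (y, 0) = 0)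
    (h : ∀ᶠ w in 𝓝 0, normalForm r' P' Q' φ' (w.1, ψ w.2) = normalForm r P Q φ w) :
    (∀ᶠ y in 𝓝 0, r y = r' y) ∧
      (∀ᶠ z in 𝓝 0, ∀ i, (ψ z).1 i + P' i (ψ z) = z.1 i + P i z ∧ Q' i (ψ z) = Q i z) ∧
      ∀ᶠ w in 𝓝 0, φ w = φ' (w.1, ψ w.2) := by
  have hr : ∀ᶠ y in 𝓝 0, r y = r' y := by
    have hinl := (continuous_id.prodMk continuous_const).tendsto' (0 : ℝ) (0 : YPQ n) rfl
    filter_upwards [hinl.eventually h, hφ0, hφ0'] with y hy h0 h0'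
    simpa [hψ.1, normalForm_mk_zero hP hQ h0, normalForm_mk_zero hP' hQ' h0'] using hy.symm
  have hcont : ∀ᶠ w in 𝓝 0, ContinuousAt (fun w => φ w - φ' (w.1, ψ w.2)) w := by
    filter_upwards [hφ.eventually_differentiableAt, hψ.eventually_continuousAt_comp hφ']
      with w h1 h2
    exact h1.continuousAt.sub h2
  have hdiff : ∀ᶠ w in 𝓝 0, ∑ i : Fin n,
      ((w.2.1 i + P i w.2 - ((ψ w.2).1 i + P' i (ψ w.2))) * w.1 ^ (2 * i.1)
        + (Q i w.2 - Q' i (ψ w.2)) * w.1 ^ (2 * i.1 + 1))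
      + (φ w - φ' (w.1, ψ w.2)) * w.1 ^ (2 * n) = 0 := by
    filter_upwards [h, (continuous_fst.tendsto 0).eventually hr] with w h1 h2
    simp only [normalForm, Finset.sum_add_distrib] at h1
    simp only [sub_mul, Finset.sum_add_distrib, Finset.sum_sub_distrib]
    linear_combination -h1 - h2
  obtain ⟨hcoef, hρ⟩ := eventually_coeffs_eq_zero (x₀ := (0 : PQ n))
    (a := fun i z => z.1 i + P i z - ((ψ z).1 i + P' i (ψ z)))
    (b := fun i z => Q i z - Q' i (ψ z)) hcont hdiff
  refine ⟨hr, hcoef.mono fun z hz i => ⟨?_, ?_⟩, hρ.mono fun w hw => sub_eq_zero.1 hw⟩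
  · linarith [(hz i).1]
  · linarith [(hz i).2]

end NormalForm

section Rigidity

def pCoord (l : Fin n) : PQ n →L[ℝ] ℝ :=
  (ContinuousLinearMap.proj l).comp (ContinuousLinearMap.fst ℝ _ _)

def qCoord (l : Fin n) : PQ n →L[ℝ] ℝ :=
  (ContinuousLinearMap.proj l).comp (ContinuousLinearMap.snd ℝ _ _)

@[simp] lemma pCoord_apply (l : Fin n) (z : PQ n) : pCoord l z = z.1 l := rfl

@[simp] lemma qCoord_apply (l : Fin n) (z : PQ n) : qCoord l z = z.2 l := rfl

variable {ψ : PQ n → PQ n}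

lemma IsLocalSymp.eventually_fderiv_apply_eq_self (hψ : IsLocalSymp n ψ) {m : ℕ}
    (hfix : ∀ᶠ z in 𝓝 0, lowerPart m (ψ z) = lowerPart m z) :
    ∀ᶠ w in 𝓝 0, ∀ v, lowerPart m v = v → fderiv ℝ ψ w v = v := by
  filter_upwards [hψ.eventually_differentiableAt, hψ.2.2.2, hfix.eventually_nhds]
    with w hw hω hfixw v hv
  exact map_eq_self_of_lowerPart hω (hw.hasFDerivAt.clm_comp_eq_of_eventually_eq hfixw) hv

lemma IsLocalSymp.eventually_fst_eq (hψ : IsLocalSymp n ψ) {l : Fin n}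
    (hfix : ∀ᶠ z in 𝓝 0, lowerPart l (ψ z) = lowerPart l z) {P P' : PQ n → ℝ}
    (hP : InIdeal n (2 * l) P) (hP' : InIdeal n (2 * l) P')
    (hrel : ∀ᶠ z in 𝓝 0, (ψ z).1 l + P' (ψ z) = z.1 l + P z) :
    ∀ᶠ z in 𝓝 0, (ψ z).1 l = z.1 l := by
  have hconst := eventually_apply_eq_apply_sub (f := fun z => pCoord l (ψ z) - pCoord l z)
    (f' := fun w => (pCoord l).comp (fderiv ℝ ψ w) - pCoord l) (π := lowerPart l)
    (hψ.eventually_differentiableAt.mono fun w hw =>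
      ((pCoord l).hasFDerivAt.comp w hw.hasFDerivAt).sub (pCoord l).hasFDerivAt)
    ((hψ.eventually_fderiv_apply_eq_self hfix).mono fun w hw v => by
      simp [hw _ (lowerPart_lowerPart _ v)])
  have hslice : Tendsto (fun z : PQ n => z - lowerPart l z) (𝓝 0) (𝓝 0) :=
    (continuous_id.sub (lowerPart l).continuous).tendsto' 0 0 (by simp)
  filter_upwards [hconst, hslice.eventually (hrel.and (hfix.and (hP.eventually_eq_zero.and
    (hψ.tendsto.eventually hP'.eventually_eq_zero))))] with z hz hz'
  obtain ⟨hrelz, hfixz, hPz, hP'z⟩ := hz'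
  set z' := z - lowerPart l z
  have hlow : lowerPart l z' = 0 := by simp [z']
  have hψlow : lowerPart l (ψ z') = 0 := hfixz.trans hlow
  rw [hPz fun j hj => genFun_eq_zero_of_lowerPart_eq_zero hj hlow,
    hP'z fun j hj => genFun_eq_zero_of_lowerPart_eq_zero hj hψlow] at hrelz
  simp only [pCoord_apply] at hz
  linarith

lemma IsLocalSymp.eventually_snd_eq (hψ : IsLocalSymp n ψ) {l : Fin n}
    (hfix : ∀ᶠ z in 𝓝 0, lowerPart l (ψ z) = lowerPart l z)
    (hp : ∀ᶠ z in 𝓝 0, (ψ z).1 l = z.1 l) {Q Q' : PQ n → ℝ}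
    (hQ : InIdeal n (2 * l + 1) Q) (hQ' : InIdeal n (2 * l + 1) Q')
    (hQd' : fderiv ℝ Q' 0 (0, Pi.single l 1) ≠ 0) (hrel : ∀ᶠ z in 𝓝 0, Q' (ψ z) = Q z) :
    ∀ᶠ z in 𝓝 0, (ψ z).2 l = z.2 l := by
  set π : PQ n →L[ℝ] PQ n := lowerPart l + (qCoord l).smulRight ((0, Pi.single l 1) : PQ n)
  have hπ (z : PQ n) : π z = lowerPart l z + z.2 l • (0, Pi.single l 1) := rfl
  have hone : ∀ᶠ w in 𝓝 0, (fderiv ℝ ψ w (0, Pi.single l 1)).2 l = 1 := by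
    filter_upwards [hψ.eventually_differentiableAt, hψ.2.2.2, hp.eventually_nhds]
      with w hw hω hpw
    exact map_inr_single_snd_eq_one hω l fun u =>
      congr_arg (· u) (hw.hasFDerivAt.clm_comp_eq_of_eventually_eq (L := pCoord l) hpw)
  have hconst := eventually_apply_eq_apply_sub (f := fun z => qCoord l (ψ z) - qCoord l z)
    (f' := fun w => (qCoord l).comp (fderiv ℝ ψ w) - qCoord l) (π := π)
    (hψ.eventually_differentiableAt.mono fun w hw =>
      ((qCoord l).hasFDerivAt.comp w hw.hasFDerivAt).sub (qCoord l).hasFDerivAt)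
    (((hψ.eventually_fderiv_apply_eq_self hfix).and hone).mono fun w hw v => by
      rw [sub_apply, ContinuousLinearMap.comp_apply, hπ, map_add, map_smul,
        hw.1 _ (lowerPart_lowerPart _ v)]
      simp [hw.2, lowerPart_apply])
  have hslice : Tendsto (fun z : PQ n => z - π z) (𝓝 0) (𝓝 0) :=
    (continuous_id.sub π.continuous).tendsto' 0 0 (by simp)
  filter_upwards [hconst, hslice.eventually (hrel.and (hfix.and (hQ.eventually_eq_zero.and
    (hψ.tendsto.eventually (hQ'.eventually_snd_eq_zero hQd')))))] with z hz hz'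
  obtain ⟨hrelz, hfixz, hQz, hQ'z⟩ := hz'
  set z' := z - π z
  have hlow : lowerPart l z' = 0 := by
    simp only [z', hπ, map_sub, map_add, map_smul, lowerPart_lowerPart, lowerPart_inr_single,
      smul_zero, add_zero, sub_self]
  have hsnd : z'.2 l = 0 := by simp [z', hπ, lowerPart_apply]
  have hψsnd : (ψ z').2 l = 0 := hQ'z (hfixz.trans hlow) <| hrelz.trans <|
    hQz fun j hj => genFun_eq_zero_of_lowerPart_eq_zero_of_snd_eq_zero hj hlow hsnd
  simp only [qCoord_apply] at hz
  linarith

theorem IsLocalSymp.eventually_eq_self (hψ : IsLocalSymp n ψ) {P Q P' Q' : Fin n → PQ n → ℝ}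
    (hP : ∀ i : Fin n, InIdeal n (2 * i) (P i)) (hQ : ∀ i : Fin n, InIdeal n (2 * i + 1) (Q i))
    (hP' : ∀ i : Fin n, InIdeal n (2 * i) (P' i))
    (hQ' : ∀ i : Fin n, InIdeal n (2 * i + 1) (Q' i))
    (hQd' : ∀ i : Fin n, fderiv ℝ (Q' i) 0 (0, Pi.single i 1) ≠ 0)
    (hp : ∀ i, ∀ᶠ z in 𝓝 0, (ψ z).1 i + P' i (ψ z) = z.1 i + P i z)
    (hq : ∀ i, ∀ᶠ z in 𝓝 0, Q' i (ψ z) = Q i z) :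
    ∀ᶠ z in 𝓝 0, ψ z = z := by
  suffices ∀ m ≤ n, ∀ᶠ z in 𝓝 0, lowerPart m (ψ z) = lowerPart m z by
    simpa only [lowerPart_of_le le_rfl] using this n le_rfl
  intro m
  induction m with
  | zero => simp [lowerPart_zero]
  | succ l ih =>
    intro hl
    have hfix := ih (by omega)
    have h1 := hψ.eventually_fst_eq (l := ⟨l, hl⟩) hfix (hP _) (hP' _) (hp _)
    have h2 := hψ.eventually_snd_eq (l := ⟨l, hl⟩) hfix h1 (hQ _) (hQ' _) (hQd' _) (hq _)
    filter_upwards [hfix, h1, h2] with z using lowerPart_succ_eq (l := ⟨l, hl⟩)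

end Rigidity

end

theorem quasi_symplectic_invariants_general (n : ℕ)
    (r r' : ℝ → ℝ) (φ φ' : YPQ n → ℝ) (Pt Qt Pt' Qt' : Fin n → (PQ n → ℝ))
    (hφsm : SmoothGerm φ) (hφsm' : SmoothGerm φ')
    (hφ0 : ∀ᶠ y in 𝓝 (0 : ℝ), φ (y, 0) = 0)
    (hφ0' : ∀ᶠ y in 𝓝 (0 : ℝ), φ' (y, 0) = 0)
    (hQd' : ∀ i : Fin n, fderiv ℝ (Qt' i) 0 ((0, Pi.single i 1) : PQ n) ≠ 0)
    (hPI : ∀ i : Fin n, InIdeal n (2 * i.1) (Pt i))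
    (hQI : ∀ i : Fin n, InIdeal n (2 * i.1 + 1) (Qt i))
    (hPI' : ∀ i : Fin n, InIdeal n (2 * i.1) (Pt' i))
    (hQI' : ∀ i : Fin n, InIdeal n (2 * i.1 + 1) (Qt' i))
    (g g' : YPQ n → ℝ)
    (hgdef : ∀ w : YPQ n, g w = r w.1
      + ∑ i : Fin n, ((w.2.1 i + Pt i w.2) * w.1 ^ (2 * i.1)
          + Qt i w.2 * w.1 ^ (2 * i.1 + 1))
      + φ w * w.1 ^ (2 * n))
    (hgdef' : ∀ w : YPQ n, g' w = r' w.1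
      + ∑ i : Fin n, ((w.2.1 i + Pt' i w.2) * w.1 ^ (2 * i.1)
          + Qt' i w.2 * w.1 ^ (2 * i.1 + 1))
      + φ' w * w.1 ^ (2 * n))
    (Ψ : YPQ n → YPQ n) (hΨ : IsLocalQuasiSymp n Ψ)
    (hy : ∀ᶠ z in 𝓝 (0 : YPQ n), (Ψ z).1 = z.1)
    (hconj : ∀ᶠ z in 𝓝 (0 : YPQ n), g' (Ψ z) = g z) :
    (∀ᶠ y in 𝓝 (0 : ℝ), r y = r' y) ∧
      (∀ᶠ w in 𝓝 (0 : YPQ n), φ w = φ' w) ∧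
      (∀ i : Fin n, ∀ᶠ w in 𝓝 (0 : PQ n), Pt i w = Pt' i w) ∧
      (∀ i : Fin n, ∀ᶠ w in 𝓝 (0 : PQ n), Qt i w = Qt' i w) := by
  obtain ⟨ψ, hψ, hΨψ⟩ := hΨ.exists_isLocalSymp hy
  have hψconj : ∀ᶠ w in 𝓝 0,
      normalForm r' Pt' Qt' φ' (w.1, ψ w.2) = normalForm r Pt Qt φ w := by
    filter_upwards [hconj, hΨψ] with w h1 h2
    rwa [h2, hgdef, hgdef'] at h1
  obtain ⟨hr, hcoef, hφ⟩ := hψ.normalForm_coeffs_eq (fun i => (hPI i).apply_zero)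
    (fun i => (hQI i).apply_zero) (fun i => (hPI' i).apply_zero) (fun i => (hQI' i).apply_zero)
    hφsm hφsm' hφ0 hφ0' hψconj
  have hid := hψ.eventually_eq_self hPI hQI hPI' hQI' hQd'
    (fun i => hcoef.mono fun z hz => (hz i).1) (fun i => hcoef.mono fun z hz => (hz i).2)
  refine ⟨hr, ?_, fun i => ?_, fun i => ?_⟩
  · filter_upwards [hφ, (continuous_snd.tendsto 0).eventually hid] with w h1 h2
    rwa [h2] at h1
  · filter_upwards [hcoef, hid] with z h1 h2
    simpa [h2] using ((h1 i).1).symm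
  · filter_upwards [hcoef, hid] with z h1 h2
    simpa [h2] using ((h1 i).2).symm

/-- the data `r, φ, P̃ᵢ, Q̃ᵢ` of the quasi-symplectic normal form
(Lemma 3 of the paper) are functional invariants: if a local
quasi-symplectomorphism preserving `y` transforms one normal form into another,
the corresponding invariants coincide as germs at `0`. -/
theorem quasi_symplectic_invariants (n : ℕ) (hn : 1 ≤ n)
    (r r' : ℝ → ℝ) (φ φ' : YPQ n → ℝ) (Pt Qt Pt' Qt' : Fin n → (PQ n → ℝ))
    (hrsm : SmoothGerm r) (hrsm' : SmoothGerm r')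
    (hφsm : SmoothGerm φ) (hφsm' : SmoothGerm φ')
    (hPsm : ∀ i, SmoothGerm (Pt i)) (hQsm : ∀ i, SmoothGerm (Qt i))
    (hPsm' : ∀ i, SmoothGerm (Pt' i)) (hQsm' : ∀ i, SmoothGerm (Qt' i))
    (hr0 : r 0 = 0) (hr0' : r' 0 = 0)
    (hrd : deriv r 0 ≠ 0) (hrd' : deriv r' 0 ≠ 0)
    (hφ0 : ∀ᶠ y in 𝓝 (0 : ℝ), φ (y, 0) = 0)
    (hφ0' : ∀ᶠ y in 𝓝 (0 : ℝ), φ' (y, 0) = 0)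
    (hPt0 : Pt ⟨0, hn⟩ = 0) (hPt0' : Pt' ⟨0, hn⟩ = 0)
    (hQd : ∀ i : Fin n, fderiv ℝ (Qt i) 0 ((0, Pi.single i 1) : PQ n) ≠ 0)
    (hQd' : ∀ i : Fin n, fderiv ℝ (Qt' i) 0 ((0, Pi.single i 1) : PQ n) ≠ 0)
    (hPI : ∀ i : Fin n, InIdeal n (2 * i.1) (Pt i))
    (hQI : ∀ i : Fin n, InIdeal n (2 * i.1 + 1) (Qt i))
    (hPI' : ∀ i : Fin n, InIdeal n (2 * i.1) (Pt' i))
    (hQI' : ∀ i : Fin n, InIdeal n (2 * i.1 + 1) (Qt' i))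
    (g g' : YPQ n → ℝ)
    (hgdef : ∀ w : YPQ n, g w = r w.1
      + ∑ i : Fin n, ((w.2.1 i + Pt i w.2) * w.1 ^ (2 * i.1)
          + Qt i w.2 * w.1 ^ (2 * i.1 + 1))
      + φ w * w.1 ^ (2 * n))
    (hgdef' : ∀ w : YPQ n, g' w = r' w.1
      + ∑ i : Fin n, ((w.2.1 i + Pt' i w.2) * w.1 ^ (2 * i.1)
          + Qt' i w.2 * w.1 ^ (2 * i.1 + 1))
      + φ' w * w.1 ^ (2 * n))
    (Ψ : YPQ n → YPQ n) (hΨ : IsLocalQuasiSymp n Ψ)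
    (hy : ∀ᶠ z in 𝓝 (0 : YPQ n), (Ψ z).1 = z.1)
    (hconj : ∀ᶠ z in 𝓝 (0 : YPQ n), g' (Ψ z) = g z) :
    (∀ᶠ y in 𝓝 (0 : ℝ), r y = r' y) ∧
      (∀ᶠ w in 𝓝 (0 : YPQ n), φ w = φ' w) ∧
      (∀ i : Fin n, ∀ᶠ w in 𝓝 (0 : PQ n), Pt i w = Pt' i w) ∧
      (∀ i : Fin n, ∀ᶠ w in 𝓝 (0 : PQ n), Qt i w = Qt' i w) :=
  quasi_symplectic_invariants_general n r r' φ φ' Pt Qt Pt' Qt' hφsm hφsm' hφ0 hφ0' hQd' hPI hQI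
    hPI' hQI' g g' hgdef hgdef' Ψ hΨ hy hconj
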